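/- Let X be a Banach function space over a finite measure space and m : Σ → X a σ-additive vector measure, with Rybakov control measure η. Suppose {fₙ} ⊆ L¹(m) is weakly null and fₙ = gₙ + hₙ, where for each n the functions gₙ and hₙ have disjoint supports, the sequence {gₙ} has uniformly a.c. norm in L¹(m) (with respect to η), and the functions {hₙ} have pairwise disjoint supports. Then both {gₙ} and {hₙ} are weakly null in L¹(m). -/

import Mathlib

open MeasureTheory Filter Topology
open scoped ENNReal

noncomputable section

namespace Paper

variable {Ω : Type*} [MeasurableSpace Ω]
variable {X : Type*} [NormedAddCommGroup X] [NormedSpace ℝ X]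

/-- The signed measure `x* ∘ m` for a functional `x*` and vector measure `m`. -/
def dualApply (m : VectorMeasure Ω X) (x : X →L[ℝ] ℝ) : SignedMeasure Ω :=
  m.mapRange x.toLinearMap.toAddMonoidHom x.continuous

/-- The semivariation `‖m‖(A)` of a vector measure. -/
def semivar (m : VectorMeasure Ω X) (A : Set Ω) : ℝ≥0∞ :=
  ⨆ x : {x : X →L[ℝ] ℝ // ‖x‖ ≤ 1}, (dualApply m x.1).totalVariation A

/-- `P` holds `‖m‖`-almost everywhere. -/
def MAE (m : VectorMeasure Ω X) (P : Ω → Prop) : Prop :=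
  ∃ N : Set Ω, MeasurableSet N ∧ semivar m N = 0 ∧ ∀ ω ∉ N, P ω

/-- The integral `∫_A f ds` of a real function with respect to a signed measure. -/
def sIntegral (s : SignedMeasure Ω) (f : Ω → ℝ) (A : Set Ω) : ℝ :=
  (∫ ω in A, f ω ∂s.toJordanDecomposition.posPart) -
    ∫ ω in A, f ω ∂s.toJordanDecomposition.negPart

/-- `f` is integrable with respect to the vector measure `m` (Bartle-Dunford-Schwartz). -/
def MIntegrable (m : VectorMeasure Ω X) (f : Ω → ℝ) : Prop :=
  Measurable f ∧
  (∀ x : X →L[ℝ] ℝ, Integrable f ((dualApply m x).totalVariation)) ∧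
  (∀ A : Set Ω, MeasurableSet A →
    ∃ v : X, ∀ x : X →L[ℝ] ℝ, x v = sIntegral (dualApply m x) f A)

open Classical in
/-- The vector integral `∫_A f dm ∈ X`. -/
def mIntegral (m : VectorMeasure Ω X) (f : Ω → ℝ) (A : Set Ω) : X :=
  if h : ∃ v : X, ∀ x : X →L[ℝ] ℝ, x v = sIntegral (dualApply m x) f A then h.choose
  else 0

/-- The norm of `L¹(m)`: `‖f‖ = sup_{‖x*‖ ≤ 1} ∫ |f| d|x*m|`. -/
def mNorm (m : VectorMeasure Ω X) (f : Ω → ℝ) : ℝ :=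
  ⨆ x : {x : X →L[ℝ] ℝ // ‖x‖ ≤ 1}, ∫ ω, |f ω| ∂(dualApply m x.1).totalVariation

/-- The vector measure `m` is separable: the pseudometric space `(Σ, d_m)`,
`d_m(A,B) = ‖m‖(A △ B)`, is separable. -/
def SeparableVM (m : VectorMeasure Ω X) : Prop :=
  ∃ D : Set (Set Ω), D.Countable ∧ (∀ B ∈ D, MeasurableSet B) ∧
    ∀ A : Set Ω, MeasurableSet A → ∀ ε : ℝ, 0 < ε →
      ∃ B ∈ D, semivar m (symmDiff A B) < ENNReal.ofReal ε

section FunctionSpace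

variable {S : Type*} [MeasurableSpace S]

/-- `T` is a bounded linear functional on the function space determined by the
membership predicate `mem` and the norm `nrm`. -/
def IsBddLinFunctional (mem : (S → ℝ) → Prop) (nrm : (S → ℝ) → ℝ)
    (T : (S → ℝ) → ℝ) : Prop :=
  (∀ f g, mem f → mem g → T (f + g) = T f + T g) ∧
  (∀ (c : ℝ) (f), mem f → T (c • f) = c * T f) ∧
  (∃ C : ℝ, ∀ f, mem f → |T f| ≤ C * nrm f)

/-- `f` is a weakly null sequence in the function space `(mem, nrm)`. -/
def WeaklyNullSeq (mem : (S → ℝ) → Prop) (nrm : (S → ℝ) → ℝ) (f : ℕ → S → ℝ) : Prop :=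
  ∀ T : (S → ℝ) → ℝ, IsBddLinFunctional mem nrm T →
    Tendsto (fun n => T (f n)) atTop (nhds 0)

/-- The set `K` has uniformly absolutely continuous norm in the function space with
norm `nrm` over the measure `μ`. -/
def UnifACNorm (μ : Measure S) (nrm : (S → ℝ) → ℝ) (K : Set (S → ℝ)) : Prop :=
  ∀ ε : ℝ, 0 < ε → ∃ δ : ℝ, 0 < δ ∧ ∀ A : Set S, MeasurableSet A →
    μ A < ENNReal.ofReal δ → ∀ f ∈ K, nrm (A.indicator f) ≤ ε

/-- The subsequence splitting property for the function space `(mem, nrm)` over `μ`. -/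
def HasSSP (μ : Measure S) (mem : (S → ℝ) → Prop) (nrm : (S → ℝ) → ℝ) : Prop :=
  ∀ f : ℕ → S → ℝ, (∀ n, mem (f n)) → (∃ C : ℝ, ∀ n, nrm (f n) ≤ C) →
    ∃ σ : ℕ → ℕ, StrictMono σ ∧
      ∃ g h : ℕ → S → ℝ,
        (∀ n, mem (g n)) ∧ (∀ n, mem (h n)) ∧
        (∀ n, f (σ n) = g n + h n) ∧
        (∀ n, (fun s => g n s * h n s) =ᵐ[μ] 0) ∧
        UnifACNorm μ nrm (Set.range g) ∧
        (∀ i j, i ≠ j → (fun s => h i s * h j s) =ᵐ[μ] 0)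

/-- The weak Banach-Saks property for the function space `(mem, nrm)`. -/
def HasWBS (mem : (S → ℝ) → Prop) (nrm : (S → ℝ) → ℝ) : Prop :=
  ∀ f : ℕ → S → ℝ, (∀ n, mem (f n)) → WeaklyNullSeq mem nrm f →
    ∃ σ : ℕ → ℕ, StrictMono σ ∧
      Tendsto (fun n : ℕ => nrm ((n : ℝ)⁻¹ • ∑ k ∈ Finset.range n, f (σ k))) atTop (nhds 0)

end FunctionSpace

/-- A Banach function space over `(S, μ)`: an (abstract) normed space `X` together with
a linear embedding `J` into measurable functions on `S`, separating points modulo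
`μ`-null sets and satisfying the ideal property. -/
structure BFS (S : Type*) [MeasurableSpace S] (μ : Measure S)
    (X : Type*) [NormedAddCommGroup X] [NormedSpace ℝ X] where
  J : X →ₗ[ℝ] (S → ℝ)
  aemeasurable : ∀ x : X, AEMeasurable (J x) μ
  eq_zero : ∀ x : X, J x =ᵐ[μ] 0 → x = 0
  ideal : ∀ (x : X) (g : S → ℝ), AEMeasurable g μ →
    (∀ᵐ s ∂μ, |g s| ≤ |J x s|) → ∃ y : X, J y =ᵐ[μ] g ∧ ‖y‖ ≤ ‖x‖

variable {S : Type*} [MeasurableSpace S] {μ : Measure S}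

/-- The set `K ⊆ X` has uniformly absolutely continuous norm in the B.f.s. `X`. -/
def BFS.UnifAC (B : BFS S μ X) (K : Set X) : Prop :=
  ∀ ε : ℝ, 0 < ε → ∃ δ : ℝ, 0 < δ ∧ ∀ A : Set S, MeasurableSet A →
    μ A < ENNReal.ofReal δ → ∀ x ∈ K, ∀ y : X, B.J y =ᵐ[μ] A.indicator (B.J x) → ‖y‖ ≤ ε

/-- The B.f.s. `X` has absolutely continuous norm. -/
def BFS.ACNorm (B : BFS S μ X) : Prop :=
  ∀ x : X, ∀ ε : ℝ, 0 < ε → ∃ δ : ℝ, 0 < δ ∧ ∀ A : Set S, MeasurableSet A →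
    μ A < ENNReal.ofReal δ → ∀ y : X, B.J y =ᵐ[μ] A.indicator (B.J x) → ‖y‖ ≤ ε

/-- The subsequence splitting property for the B.f.s. `X`. -/
def BFS.SSP (B : BFS S μ X) : Prop :=
  ∀ f : ℕ → X, (∃ C : ℝ, ∀ n, ‖f n‖ ≤ C) →
    ∃ σ : ℕ → ℕ, StrictMono σ ∧
      ∃ g h : ℕ → X,
        (∀ n, f (σ n) = g n + h n) ∧
        (∀ n, (fun s => B.J (g n) s * B.J (h n) s) =ᵐ[μ] 0) ∧
        B.UnifAC (Set.range g) ∧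
        (∀ i j, i ≠ j → (fun s => B.J (h i) s * B.J (h j) s) =ᵐ[μ] 0)

/-- The weak Banach-Saks property for a normed space `Z`: every weakly null sequence has a
subsequence whose arithmetic means converge to zero in norm. -/
def WeakBanachSaks (Z : Type*) [NormedAddCommGroup Z] [NormedSpace ℝ Z] : Prop :=
  ∀ z : ℕ → Z, (∀ φ : Z →L[ℝ] ℝ, Tendsto (fun n => φ (z n)) atTop (nhds 0)) →
    ∃ σ : ℕ → ℕ, StrictMono σ ∧
      Tendsto (fun n : ℕ => ‖(n : ℝ)⁻¹ • ∑ k ∈ Finset.range n, z (σ k)‖) atTop (nhds 0)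


/-!
Let `η = |x₀*m|` and `Bₙ = ⋃_{k ≥ n} supp hₖ`. The supports of the `hₖ` are `η`-almost disjoint,
so `η(Bₙ) → 0`. For a bounded functional `T` on `L¹(m)`, `φ ↦ T(χ_{Bₙ} φ)` is again bounded, and
for `k ≥ n` we have `T(hₖ) = T(χ_{Bₙ} fₖ) - T(χ_{Bₙ} gₖ)`. Here `T(χ_{Bₙ} fₖ) → 0` as `k → ∞`
because `{fₖ}` is weakly null, and `T(χ_{Bₙ} gₖ)` is small uniformly in `k` once `η(Bₙ)` is small
because `{gₖ}` has uniformly a.c. norm. Hence `T(hₖ) → 0`, and then `T(gₖ) = T(fₖ) - T(hₖ) → 0`.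

That `χ_B φ` has `L¹(m)`-norm at most that of `φ` needs the supremum defining `‖φ‖_{L¹(m)}` to
be finite. This follows from the uniform boundedness principle applied to the vector integrals
`∫_A φ dm`, which are weakly bounded by `∫ |φ| d|x*m|`.
-/

theorem tendsto_measure_biUnion_Ici_zero_of_pairwise_aedisjoint {κ : Measure Ω}
    [IsFiniteMeasure κ] {E : ℕ → Set Ω} (hE : ∀ i, NullMeasurableSet (E i) κ)
    (hd : Pairwise fun i j => AEDisjoint κ (E i) (E j)) :
    Tendsto (fun n => κ (⋃ i ≥ n, E i)) atTop (𝓝 0) := by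
  have hsum : ∑' i, κ (E i) ≠ ∞ := by
    rw [← measure_iUnion₀ hd hE]
    exact measure_ne_top _ _
  have hlimsup := measure_limsup_atTop_eq_zero hsum
  rw [limsup_eq_iInf_iSup_of_nat] at hlimsup
  rw [← hlimsup]
  refine tendsto_measure_iInter_atTop (fun n => .biUnion (Set.to_countable _) fun i _ => hE i)
    (fun n m hnm => Set.biUnion_mono (fun i hi => le_trans hnm hi) fun _ _ => subset_rfl)
    ⟨0, measure_ne_top _ _⟩

theorem integral_abs_le_two_mul_of_abs_setIntegral_le {κ : Measure Ω} {φ : Ω → ℝ}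
    (hmeas : Measurable φ) (hφ : Integrable φ κ) {M : ℝ}
    (hM : ∀ A, MeasurableSet A → |∫ ω in A, φ ω ∂κ| ≤ M) :
    ∫ ω, |φ ω| ∂κ ≤ 2 * M := by
  have hpos := hM {ω | 0 ≤ φ ω} (measurableSet_le measurable_const hmeas)
  have hneg := hM {ω | φ ω ≤ 0} (measurableSet_le hmeas measurable_const)
  rw [abs_le] at hpos hneg
  have := integral_norm_eq_pos_sub_neg hφ
  simp only [Real.norm_eq_abs] at this
  linarith

theorem setIntegral_inter_sub_setIntegral_inter {κ ν : Measure Ω} {t : Set Ω}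
    (hκ : κ tᶜ = 0) (hν : ν t = 0) (φ : Ω → ℝ) (A : Set Ω) :
    (∫ ω in A ∩ t, φ ω ∂κ) - ∫ ω in A ∩ t, φ ω ∂ν = ∫ ω in A, φ ω ∂κ := by
  rw [setIntegral_measure_zero φ (measure_mono_null Set.inter_subset_right hν), sub_zero,
    setIntegral_congr_set (inter_ae_eq_left_of_ae_eq_univ (ae_eq_univ.2 hκ))]

theorem integral_abs_add_measure {κ ν : Measure Ω} {φ : Ω → ℝ} (hφ : Integrable φ (κ + ν)) :
    ∫ ω, |φ ω| ∂(κ + ν) = (∫ ω, |φ ω| ∂κ) + ∫ ω, |φ ω| ∂ν :=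
  integral_add_measure hφ.left_of_add_measure.abs hφ.right_of_add_measure.abs

theorem abs_setIntegral_le_integral_abs {κ : Measure Ω} {φ : Ω → ℝ} (hφ : Integrable φ κ)
    (A : Set Ω) : |∫ ω in A, φ ω ∂κ| ≤ ∫ ω, |φ ω| ∂κ :=
  abs_integral_le_integral_abs.trans <|
    setIntegral_le_integral hφ.abs (.of_forall fun _ => abs_nonneg _)

theorem abs_sIntegral_le_integral_abs {s : SignedMeasure Ω} {φ : Ω → ℝ}
    (hφ : Integrable φ s.totalVariation) (A : Set Ω) :
    |sIntegral s φ A| ≤ ∫ ω, |φ ω| ∂s.totalVariation := by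
  rw [SignedMeasure.totalVariation, integral_abs_add_measure hφ]
  exact (abs_sub _ _).trans <| add_le_add
    (abs_setIntegral_le_integral_abs hφ.left_of_add_measure A)
    (abs_setIntegral_le_integral_abs hφ.right_of_add_measure A)

theorem integral_abs_le_four_mul_of_abs_sIntegral_le {s : SignedMeasure Ω} {φ : Ω → ℝ}
    (hmeas : Measurable φ) (hφ : Integrable φ s.totalVariation) {M : ℝ}
    (hM : ∀ A, MeasurableSet A → |sIntegral s φ A| ≤ M) :
    ∫ ω, |φ ω| ∂s.totalVariation ≤ 4 * M := by
  obtain ⟨t, ht, hpos, hneg⟩ := s.toJordanDecomposition.mutuallySingular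
  rw [← compl_compl t] at hpos
  have hposM := integral_abs_le_two_mul_of_abs_setIntegral_le hmeas hφ.left_of_add_measure
    fun A hA => by
      rw [← setIntegral_inter_sub_setIntegral_inter hpos hneg]
      exact hM _ (hA.inter ht.compl)
  rw [compl_compl] at hpos
  have hnegM := integral_abs_le_two_mul_of_abs_setIntegral_le hmeas hφ.right_of_add_measure
    fun A hA => by
      rw [← setIntegral_inter_sub_setIntegral_inter hneg hpos, abs_sub_comm]
      exact hM _ (hA.inter ht)
  rw [SignedMeasure.totalVariation, integral_abs_add_measure hφ]
  linarith

theorem exists_norm_le_of_forall_exists_abs_le {V : Set X}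
    (hV : ∀ x : X →L[ℝ] ℝ, ∃ C, ∀ v ∈ V, |x v| ≤ C) : ∃ M, ∀ v ∈ V, ‖v‖ ≤ M := by
  obtain ⟨M, hM⟩ := banach_steinhaus
    (g := fun v : V => NormedSpace.inclusionInDoubleDualLi ℝ (E := X) v) fun x => by
      obtain ⟨C, hC⟩ := hV x
      exact ⟨C, fun v => hC v v.2⟩
  exact ⟨M, fun v hv => (LinearIsometry.norm_map _ v).symm.le.trans (hM ⟨v, hv⟩)⟩

theorem mNorm_nonneg (m : VectorMeasure Ω X) (φ : Ω → ℝ) : 0 ≤ mNorm m φ :=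
  Real.iSup_nonneg fun _ => integral_nonneg fun _ => abs_nonneg _

section MIntegrable

variable {m : VectorMeasure Ω X} {φ : Ω → ℝ}

theorem MIntegrable.exists_abs_sIntegral_le (hφ : MIntegrable m φ) :
    ∃ M, ∀ x : X →L[ℝ] ℝ, ‖x‖ ≤ 1 → ∀ A, MeasurableSet A →
      |sIntegral (dualApply m x) φ A| ≤ M := by
  obtain ⟨M, hM⟩ := exists_norm_le_of_forall_exists_abs_le
    (V := {v | ∃ A, MeasurableSet A ∧ ∀ x : X →L[ℝ] ℝ, x v = sIntegral (dualApply m x) φ A})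
    fun x => ⟨_, fun v ⟨A, _, hv⟩ => (hv x).symm ▸ abs_sIntegral_le_integral_abs (hφ.2.1 x) A⟩
  refine ⟨M, fun x hx A hA => ?_⟩
  obtain ⟨v, hv⟩ := hφ.2.2 A hA
  calc |sIntegral (dualApply m x) φ A| = ‖x v‖ := by rw [hv x, Real.norm_eq_abs]
    _ ≤ ‖x‖ * ‖v‖ := x.le_opNorm v
    _ ≤ M := (mul_le_of_le_one_left (norm_nonneg v) hx).trans (hM v ⟨A, hA, hv⟩)

theorem MIntegrable.bddAbove_integral_abs (hφ : MIntegrable m φ) :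
    BddAbove (Set.range fun x : {x : X →L[ℝ] ℝ // ‖x‖ ≤ 1} =>
      ∫ ω, |φ ω| ∂(dualApply m x.1).totalVariation) := by
  obtain ⟨M, hM⟩ := hφ.exists_abs_sIntegral_le
  exact ⟨4 * M, Set.forall_mem_range.2 fun x =>
    integral_abs_le_four_mul_of_abs_sIntegral_le hφ.1 (hφ.2.1 x) (hM x x.2)⟩

theorem MIntegrable.indicator (hφ : MIntegrable m φ) {B : Set Ω} (hB : MeasurableSet B) :
    MIntegrable m (B.indicator φ) := by
  refine ⟨hφ.1.indicator hB, fun x => (hφ.2.1 x).indicator hB, fun A hA => ?_⟩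
  obtain ⟨v, hv⟩ := hφ.2.2 (A ∩ B) (hA.inter hB)
  refine ⟨v, fun x => ?_⟩
  rw [hv x, sIntegral, sIntegral, setIntegral_indicator hB, setIntegral_indicator hB]

theorem mNorm_indicator_le (hφ : MIntegrable m φ) {B : Set Ω} (hB : MeasurableSet B) :
    mNorm m (B.indicator φ) ≤ mNorm m φ := by
  have : Nonempty {x : X →L[ℝ] ℝ // ‖x‖ ≤ 1} := ⟨⟨0, by simp⟩⟩
  refine ciSup_le fun x => le_trans ?_ (le_ciSup hφ.bddAbove_integral_abs x)
  refine integral_mono ((hφ.2.1 x.1).indicator hB).abs (hφ.2.1 x.1).abs fun ω => ?_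
  by_cases hω : ω ∈ B
  · simp [Set.indicator_of_mem hω]
  · simp [Set.indicator_of_notMem hω]

theorem IsBddLinFunctional.exists_nonneg_bound {T : (Ω → ℝ) → ℝ}
    (hT : IsBddLinFunctional (MIntegrable m) (mNorm m) T) :
    ∃ C, 0 ≤ C ∧ ∀ φ, MIntegrable m φ → |T φ| ≤ C * mNorm m φ := by
  obtain ⟨C, hC⟩ := hT.2.2
  exact ⟨max C 0, le_max_right _ _, fun φ hφ => (hC φ hφ).trans <|
    mul_le_mul_of_nonneg_right (le_max_left _ _) (mNorm_nonneg m φ)⟩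

theorem IsBddLinFunctional.comp_indicator {T : (Ω → ℝ) → ℝ}
    (hT : IsBddLinFunctional (MIntegrable m) (mNorm m) T) {B : Set Ω} (hB : MeasurableSet B) :
    IsBddLinFunctional (MIntegrable m) (mNorm m) fun φ => T (B.indicator φ) := by
  obtain ⟨C, hC0, hC⟩ := hT.exists_nonneg_bound
  refine ⟨fun φ ψ hφ hψ => ?_, fun c φ hφ => ?_, C, fun φ hφ => ?_⟩
  · simp only [Set.indicator_add']
    exact hT.1 _ _ (hφ.indicator hB) (hψ.indicator hB)
  · dsimp only
    rw [show B.indicator (c • φ) = c • B.indicator φ from Set.indicator_const_smul B c φ]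
    exact hT.2.1 c _ (hφ.indicator hB)
  · exact (hC _ (hφ.indicator hB)).trans <|
      mul_le_mul_of_nonneg_left (mNorm_indicator_le hφ hB) hC0

theorem MAE.ae {κ : Measure Ω} (hκ : ∀ A, MeasurableSet A → semivar m A = 0 → κ A = 0)
    {P : Ω → Prop} (hP : MAE m P) : ∀ᵐ ω ∂κ, P ω := by
  obtain ⟨N, hN, hN0, hNP⟩ := hP
  exact measure_mono_null (fun ω hω => by_contra fun hωN => hω (hNP ω hωN)) (hκ N hN hN0)

end MIntegrable

theorem WeaklyNullSeq.left_of_add {α : Type*} {mem : (α → ℝ) → Prop} {nrm : (α → ℝ) → ℝ}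
    {f g h : ℕ → α → ℝ} (hf : WeaklyNullSeq mem nrm f) (hh : WeaklyNullSeq mem nrm h)
    (hg_mem : ∀ n, mem (g n)) (hh_mem : ∀ n, mem (h n)) (hsplit : ∀ n, f n = g n + h n) :
    WeaklyNullSeq mem nrm g := fun T hT => by
  have hTg : ∀ n, T (g n) = T (f n) - T (h n) := fun n => by
    rw [hsplit, hT.1 _ _ (hg_mem n) (hh_mem n), add_sub_cancel_right]
  simpa only [hTg, sub_zero] using (hf T hT).sub (hh T hT)

theorem weaklyNullSeq_of_unifACNorm_of_support_subset {m : VectorMeasure Ω X} {κ : Measure Ω}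
    {f g h : ℕ → Ω → ℝ} (hg : ∀ n, MIntegrable m (g n)) (hh : ∀ n, MIntegrable m (h n))
    (hwn : WeaklyNullSeq (MIntegrable m) (mNorm m) f) (hsplit : ∀ n, f n = g n + h n)
    (hgUAC : UnifACNorm κ (mNorm m) (Set.range g))
    {B : ℕ → Set Ω} (hB : ∀ N, MeasurableSet (B N))
    (hB0 : Tendsto (fun N => κ (B N)) atTop (𝓝 0))
    (hhB : ∀ N n, N ≤ n → Function.support (h n) ⊆ B N) :
    WeaklyNullSeq (MIntegrable m) (mNorm m) h := by
  intro T hT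
  rw [Metric.tendsto_atTop]
  intro ε hε
  obtain ⟨C, hC0, hC⟩ := hT.exists_nonneg_bound
  obtain ⟨δ, hδ, hgsmall⟩ := hgUAC (ε / (2 * (C + 1))) (by positivity)
  obtain ⟨N, hN⟩ := (hB0.eventually_lt_const (ENNReal.ofReal_pos.2 hδ)).exists
  obtain ⟨N', hN'⟩ := Metric.tendsto_atTop.1 (hwn _ (hT.comp_indicator (hB N))) (ε / 2)
    (by positivity)
  refine ⟨max N N', fun n hn => ?_⟩
  have hsplitB : T ((B N).indicator (f n)) = T ((B N).indicator (g n)) + T (h n) := by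
    rw [hsplit, Set.indicator_add', Set.indicator_eq_self.2 (hhB N n (le_of_max_le_left hn))]
    exact hT.1 _ _ ((hg n).indicator (hB N)) (hh n)
  have hTg : |T ((B N).indicator (g n))| ≤ ε / 2 :=
    calc |T ((B N).indicator (g n))| ≤ C * (ε / (2 * (C + 1))) :=
          (hC _ ((hg n).indicator (hB N))).trans <|
            mul_le_mul_of_nonneg_left (hgsmall _ (hB N) hN _ ⟨n, rfl⟩) hC0
      _ ≤ ε / 2 := by
          rw [mul_div_assoc', div_le_div_iff₀ (by positivity) two_pos]
          nlinarith
  have hTf := hN' n (le_of_max_le_right hn)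
  rw [Real.dist_eq, sub_zero] at hTf ⊢
  rw [abs_lt] at hTf ⊢
  rw [abs_le] at hTg
  constructor <;> linarith

theorem statement8_general
    {X : Type*} [NormedAddCommGroup X] [NormedSpace ℝ X]
    {Ω : Type*} [MeasurableSpace Ω] (m : VectorMeasure Ω X)
    (x₀ : X →L[ℝ] ℝ)
    (hRyb : ∀ A : Set Ω, MeasurableSet A →
      ((dualApply m x₀).totalVariation A = 0 ↔ semivar m A = 0))
    (f g h : ℕ → Ω → ℝ)
    (hg : ∀ n, MIntegrable m (g n))
    (hh : ∀ n, MIntegrable m (h n))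
    (hwn : WeaklyNullSeq (MIntegrable m) (mNorm m) f)
    (hsplit : ∀ n, f n = g n + h n)
    (hgUAC : UnifACNorm ((dualApply m x₀).totalVariation) (mNorm m) (Set.range g))
    (hhdisj : ∀ i j, i ≠ j → MAE m (fun ω => h i ω * h j ω = 0)) :
    WeaklyNullSeq (MIntegrable m) (mNorm m) g ∧
      WeaklyNullSeq (MIntegrable m) (mNorm m) h := by
  set η := (dualApply m x₀).totalVariation
  have : IsFiniteMeasure η := by unfold η SignedMeasure.totalVariation; infer_instance
  have hsupp : ∀ n, MeasurableSet (Function.support (h n)) :=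
    fun n => measurableSet_support (hh n).1
  have hsupp_disj :
      Pairwise fun i j => AEDisjoint η (Function.support (h i)) (Function.support (h j)) :=
    fun i j hij => measure_mono_null (fun ω hω => mul_ne_zero hω.1 hω.2)
      ((hhdisj i j hij).ae fun A hA => (hRyb A hA).2)
  have hwnh := weaklyNullSeq_of_unifACNorm_of_support_subset hg hh hwn hsplit hgUAC
    (fun N => .biUnion (Set.to_countable _) fun i _ => hsupp i)
    (tendsto_measure_biUnion_Ici_zero_of_pairwise_aedisjoint
      (fun i => (hsupp i).nullMeasurableSet) hsupp_disj)
    fun N n hn => Set.subset_biUnion_of_mem (u := fun i => Function.support (h i)) hn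
  exact ⟨hwn.left_of_add hwnh hg hh hsplit, hwnh⟩

/-- if a weakly null sequence in `L¹(m)` splits as `fₙ = gₙ + hₙ` with disjoint
supports, `{gₙ}` of uniformly a.c. norm and `{hₙ}` pairwise disjointly supported, then both
`{gₙ}` and `{hₙ}` are weakly null in `L¹(m)`. -/
theorem statement8
    {S : Type*} [MeasurableSpace S] {μ : Measure S} [IsFiniteMeasure μ]
    {X : Type*} [NormedAddCommGroup X] [NormedSpace ℝ X] [CompleteSpace X]
    (B : BFS S μ X)
    {Ω : Type*} [MeasurableSpace Ω] (m : VectorMeasure Ω X)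
    (x₀ : X →L[ℝ] ℝ)
    (hRyb : ∀ A : Set Ω, MeasurableSet A →
      ((dualApply m x₀).totalVariation A = 0 ↔ semivar m A = 0))
    (f g h : ℕ → Ω → ℝ)
    (hf : ∀ n, MIntegrable m (f n)) (hg : ∀ n, MIntegrable m (g n))
    (hh : ∀ n, MIntegrable m (h n))
    (hwn : WeaklyNullSeq (MIntegrable m) (mNorm m) f)
    (hsplit : ∀ n, f n = g n + h n)
    (hdisj : ∀ n, MAE m (fun ω => g n ω * h n ω = 0))
    (hgUAC : UnifACNorm ((dualApply m x₀).totalVariation) (mNorm m) (Set.range g))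
    (hhdisj : ∀ i j, i ≠ j → MAE m (fun ω => h i ω * h j ω = 0)) :
    WeaklyNullSeq (MIntegrable m) (mNorm m) g ∧
      WeaklyNullSeq (MIntegrable m) (mNorm m) h :=
  statement8_general m x₀ hRyb f g h hg hh hwn hsplit hgUAC hhdisj

end Paper
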